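/- Let q be a prime power with q > 2a + 1 for a positive integer a. The code C obtained by evaluating all F_q-linear combinations of monomials x^i y^j with (i,j) a lattice point in the triangle with vertices (0,0), (a,a), (0,2a) at all points of (F_q^×)² has length n = (q-1)², dimension k = (a+1)², and minimum distance d = n - 2a(q-1). -/

import Mathlib

open MvPolynomial

/-- Evaluation of a polynomial in two variables at all points of the torus
`(F^×)²`, as a linear map. -/
noncomputable def evalTorus (F : Type) [Field F] :
    MvPolynomial (Fin 2) F →ₗ[F] ((Fˣ × Fˣ) → F) :=
  LinearMap.pi fun t => (aeval ![((t.1 : F)), ((t.2 : F))]).toLinearMap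

lemma evalTorus_apply {F : Type} [Field F] (f : MvPolynomial (Fin 2) F) (t : Fˣ × Fˣ) :
    evalTorus F f t = aeval ![((t.1 : F)), ((t.2 : F))] f := rfl

/-! ### The transfer to `F[Y][X]` -/

noncomputable def psiT (F : Type) [Field F] :
    MvPolynomial (Fin 2) F →ₐ[F] Polynomial (Polynomial F) :=
  aeval ![Polynomial.X, Polynomial.C Polynomial.X]

section Psi

variable {F : Type} [Field F]

lemma psiT_monomial (d : Fin 2 →₀ ℕ) (c : F) :
    psiT F (monomial d c) =
      Polynomial.C (Polynomial.C c * Polynomial.X ^ (d 1)) * Polynomial.X ^ (d 0) := by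
  rw [psiT, MvPolynomial.aeval_monomial, Finsupp.prod_fintype _ _ (fun i => pow_zero _)]
  rw [Fin.prod_univ_two]
  rw [Polynomial.algebraMap_apply, Polynomial.algebraMap_apply, Algebra.algebraMap_self,
    RingHom.id_apply]
  simp only [Matrix.cons_val_zero, Matrix.cons_val_one, Matrix.head_cons, ← Polynomial.C_pow,
    map_mul]
  ring

lemma fin2_finsupp_eq (d : Fin 2 →₀ ℕ) (i j : ℕ) :
    d = Finsupp.single 0 i + Finsupp.single 1 j ↔ d 0 = i ∧ d 1 = j := by
  constructor
  · rintro rfl; simp [Finsupp.single_apply]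
  · rintro ⟨h0, h1⟩
    ext k
    match k with
    | 0 => simp [Finsupp.single_apply, h0]
    | 1 => simp [Finsupp.single_apply, h1]

lemma coeff_psiT (f : MvPolynomial (Fin 2) F) (i j : ℕ) :
    ((psiT F f).coeff i).coeff j = f.coeff (Finsupp.single 0 i + Finsupp.single 1 j) := by
  induction f using MvPolynomial.induction_on' with
  | monomial d c =>
    rw [psiT_monomial, MvPolynomial.coeff_monomial, Polynomial.coeff_C_mul_X_pow]
    by_cases h0 : i = d 0
    · rw [if_pos h0, Polynomial.coeff_C_mul_X_pow]
      by_cases h1 : j = d 1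
      · rw [if_pos h1, if_pos ((fin2_finsupp_eq d i j).mpr ⟨h0.symm, h1.symm⟩)]
      · rw [if_neg h1, if_neg (by rw [fin2_finsupp_eq]; rintro ⟨_, hh⟩; exact h1 hh.symm)]
    · rw [if_neg h0, if_neg (by rw [fin2_finsupp_eq]; rintro ⟨hh, _⟩; exact h0 hh.symm),
        Polynomial.coeff_zero]
  | add p q hp hq => simp [map_add, hp, hq]

lemma psiT_eq_zero_iff {f : MvPolynomial (Fin 2) F} : psiT F f = 0 ↔ f = 0 := by
  constructor
  · intro h
    ext d
    have h2 := coeff_psiT f (d 0) (d 1)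
    rw [h] at h2
    have hd : (Finsupp.single 0 (d 0) + Finsupp.single 1 (d 1) : Fin 2 →₀ ℕ) = d :=
      ((fin2_finsupp_eq d _ _).mpr ⟨rfl, rfl⟩).symm
    simpa [hd] using h2.symm
  · rintro rfl; simp

lemma eval_psiT (f : MvPolynomial (Fin 2) F) (x y : F) :
    aeval ![x, y] f = Polynomial.eval x ((psiT F f).map (Polynomial.evalRingHom y)) := by
  induction f using MvPolynomial.induction_on' with
  | monomial d c =>
    rw [psiT_monomial, MvPolynomial.aeval_monomial,
      Finsupp.prod_fintype _ _ (fun i => pow_zero _), Fin.prod_univ_two]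
    simp [mul_comm, mul_assoc, mul_left_comm]
  | add p q hp hq => simp [map_add, hp, hq]

/-! ### Degree bounds -/

lemma support_coeff_psiT {a : ℕ} {f : MvPolynomial (Fin 2) F}
    (hs : ∀ d ∈ f.support, d 0 ≤ d 1 ∧ d 0 + d 1 ≤ 2 * a)
    {i j : ℕ} (h : ((psiT F f).coeff i).coeff j ≠ 0) : i ≤ j ∧ i + j ≤ 2 * a := by
  rw [coeff_psiT] at h
  have h2 := hs _ (MvPolynomial.mem_support_iff.mpr h)
  simpa [Finsupp.single_apply] using h2

lemma natDegree_psiT_le {a : ℕ} {f : MvPolynomial (Fin 2) F}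
    (hs : ∀ d ∈ f.support, d 0 ≤ d 1 ∧ d 0 + d 1 ≤ 2 * a) :
    (psiT F f).natDegree ≤ a := by
  rw [Polynomial.natDegree_le_iff_coeff_eq_zero]
  intro N hN
  by_contra hc
  obtain ⟨h1, h2⟩ := support_coeff_psiT hs
    (Polynomial.leadingCoeff_ne_zero.mpr hc : ((psiT F f).coeff N).coeff _ ≠ 0)
  omega

lemma natDegree_coeff_psiT_le {a : ℕ} {f : MvPolynomial (Fin 2) F}
    (hs : ∀ d ∈ f.support, d 0 ≤ d 1 ∧ d 0 + d 1 ≤ 2 * a) (i : ℕ) :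
    ((psiT F f).coeff i).natDegree ≤ 2 * a - i := by
  rw [Polynomial.natDegree_le_iff_coeff_eq_zero]
  intro N hN
  by_contra hc
  obtain ⟨h1, h2⟩ := support_coeff_psiT hs hc
  omega

/-! ### Root counting -/

lemma units_roots_card [Fintype F] [DecidableEq F] {p : Polynomial F} (hp : p ≠ 0) :
    (Finset.univ.filter (fun x : Fˣ => p.eval ↑x = 0)).card ≤ p.natDegree := by
  have hmem : ∀ x ∈ Finset.univ.filter (fun x : Fˣ => p.eval ↑x = 0),
      ((x : F)) ∈ p.roots.toFinset := by
    intro x hx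
    rw [Finset.mem_filter] at hx
    rw [Multiset.mem_toFinset, Polynomial.mem_roots hp]
    exact hx.2
  have hinj : Set.InjOn (fun x : Fˣ => (x : F))
      ↑(Finset.univ.filter (fun x : Fˣ => p.eval ↑x = 0)) :=
    fun x _ y _ h => Units.ext h
  exact (Finset.card_le_card_of_injOn _ hmem hinj).trans
    ((Multiset.toFinset_card_le _).trans (Polynomial.card_roots' p))

lemma filter_prod_card {α β : Type} [Fintype α] [Fintype β] [DecidableEq α] [DecidableEq β]
    (P : α × β → Prop) [DecidablePred P] :
    (Finset.univ.filter P).card = ∑ y : β, (Finset.univ.filter fun x : α => P (x, y)).card := by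
  have h : (Finset.univ.filter P) =
      (Finset.univ : Finset β).biUnion
        (fun y => (Finset.univ.filter fun x : α => P (x, y)).image (fun x => (x, y))) := by
    ext ⟨x, y⟩
    simp only [Finset.mem_filter, Finset.mem_univ, true_and, Finset.mem_biUnion,
      Finset.mem_image, Prod.mk.injEq]
    exact ⟨fun h => ⟨y, x, h, rfl, rfl⟩, fun ⟨b, c, h, hb, hc⟩ => by subst hb; subst hc; exact h⟩
  rw [h, Finset.card_biUnion]
  · refine Finset.sum_congr rfl fun y _ => ?_
    exact Finset.card_image_of_injective _ (fun x x' h => by simpa using congrArg Prod.fst h)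
  · intro y _ y' _ hyy
    simp only [Finset.disjoint_left, Finset.mem_image]
    rintro ⟨x, z⟩ ⟨u, hu, huv⟩ ⟨w, hw, hwv⟩
    exact hyy (by
      have h1 := congrArg Prod.snd huv
      have h2 := congrArg Prod.snd hwv
      simp only at h1 h2
      rw [h1, h2])

lemma zeros_card_le [Fintype F] [DecidableEq F] {a : ℕ} {f : MvPolynomial (Fin 2) F} (hf : f ≠ 0)
    (hs : ∀ d ∈ f.support, d 0 ≤ d 1 ∧ d 0 + d 1 ≤ 2 * a) :
    (Finset.univ.filter (fun t : Fˣ × Fˣ => aeval ![(t.1 : F), (t.2 : F)] f = 0)).card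
      ≤ 2 * a * (Fintype.card F - 1) := by
  classical
  set Q := Fintype.card F - 1 with hQ
  have hcardU : Fintype.card Fˣ = Q := Fintype.card_units F
  set g := psiT F f with hg
  have hg0 : g ≠ 0 := fun h => hf (psiT_eq_zero_iff.mp h)
  set i₀ := g.natDegree with hi₀
  have hlead : g.coeff i₀ ≠ 0 := by
    rw [← Polynomial.leadingCoeff]
    exact Polynomial.leadingCoeff_ne_zero.mpr hg0
  have hi0a : i₀ ≤ a := natDegree_psiT_le hs
  have hldeg : (g.coeff i₀).natDegree ≤ 2 * a - i₀ := natDegree_coeff_psiT_le hs i₀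
  rw [filter_prod_card]
  set N : Fˣ → ℕ := fun y =>
    (Finset.univ.filter fun x : Fˣ =>
      Polynomial.eval (x : F) (g.map (Polynomial.evalRingHom (y : F))) = 0).card with hN
  have hline : ∀ y : Fˣ,
      (Finset.univ.filter fun x : Fˣ => aeval ![((x : Fˣ) : F), (y : F)] f = 0).card = N y := by
    intro y
    congr 1
    apply Finset.filter_congr
    intro x _
    rw [eval_psiT]
  have hNQ : ∀ y : Fˣ, N y ≤ Q := fun y => by
    rw [← hcardU, ← Finset.card_univ]; exact Finset.card_filter_le _ _
  have hNgood : ∀ y : Fˣ, Polynomial.eval (y : F) (g.coeff i₀) ≠ 0 → N y ≤ i₀ := by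
    intro y hy
    have hmap0 : g.map (Polynomial.evalRingHom (y : F)) ≠ 0 := by
      intro h
      apply hy
      have := Polynomial.coeff_map (Polynomial.evalRingHom (y : F)) i₀ (p := g)
      rw [h, Polynomial.coeff_zero] at this
      exact this.symm
    exact (units_roots_card hmap0).trans Polynomial.natDegree_map_le
  set S := Finset.univ.filter (fun y : Fˣ => Polynomial.eval (y : F) (g.coeff i₀) = 0) with hSdef
  have hScard : S.card ≤ 2 * a - i₀ := (units_roots_card hlead).trans hldeg
  have hsplit : ∑ y : Fˣ, N y = ∑ y ∈ S, N y +
      ∑ y ∈ Finset.univ.filter (fun y : Fˣ => ¬ Polynomial.eval (y : F) (g.coeff i₀) = 0), N y :=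
    (Finset.sum_filter_add_sum_filter_not _ _ _).symm
  have h1 : ∑ y ∈ S, N y ≤ S.card * Q := by
    have := Finset.sum_le_card_nsmul S N Q (fun y _ => hNQ y)
    simpa [smul_eq_mul] using this
  have h2 : ∑ y ∈ Finset.univ.filter
      (fun y : Fˣ => ¬ Polynomial.eval (y : F) (g.coeff i₀) = 0), N y ≤ Q * i₀ := by
    have hb := Finset.sum_le_card_nsmul
      (Finset.univ.filter (fun y : Fˣ => ¬ Polynomial.eval (y : F) (g.coeff i₀) = 0)) N i₀
      (fun y hy => hNgood y (Finset.mem_filter.mp hy).2)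
    have hc : (Finset.univ.filter
        (fun y : Fˣ => ¬ Polynomial.eval (y : F) (g.coeff i₀) = 0)).card ≤ Q := by
      rw [← hcardU, ← Finset.card_univ]; exact Finset.card_filter_le _ _
    calc _ ≤ _ := hb
    _ ≤ Q * i₀ := by simpa [smul_eq_mul] using Nat.mul_le_mul_right i₀ hc
  calc ∑ y : Fˣ, (Finset.univ.filter fun x : Fˣ => aeval ![((x : Fˣ) : F), (y : F)] f = 0).card
      = ∑ y : Fˣ, N y := Finset.sum_congr rfl (fun y _ => hline y)
    _ ≤ S.card * Q + Q * i₀ := by rw [hsplit]; exact Nat.add_le_add h1 h2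
    _ ≤ (2 * a - i₀) * Q + Q * i₀ := Nat.add_le_add_right (Nat.mul_le_mul_right Q hScard) _
    _ = 2 * a * Q := by rw [mul_comm Q i₀, ← Nat.add_mul, Nat.sub_add_cancel (by omega)]

end Psi

/-! ### Counting lattice points -/

lemma sum_odd_sq (n : ℕ) : ∑ i ∈ Finset.range n, (2 * i + 1) = n ^ 2 := by
  induction n with
  | zero => simp
  | succ n ih => rw [Finset.sum_range_succ, ih]; ring

def DD (a : ℕ) : Finset (ℕ × ℕ) :=
  (Finset.range (2 * a + 1) ×ˢ Finset.range (2 * a + 1)).filter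
    (fun p => p.1 ≤ p.2 ∧ p.1 + p.2 ≤ 2 * a)

lemma DD_card (a : ℕ) : (DD a).card = (a + 1) ^ 2 := by
  have hrw : DD a = (Finset.range (a + 1)).biUnion
      (fun i => (Finset.Icc i (2 * a - i)).image (Prod.mk i)) := by
    ext ⟨i, j⟩
    simp only [DD, Finset.mem_filter, Finset.mem_product, Finset.mem_range, Finset.mem_biUnion,
      Finset.mem_image, Finset.mem_Icc, Prod.mk.injEq]
    constructor
    · rintro ⟨⟨h1, h2⟩, h3, h4⟩
      exact ⟨i, by omega, j, by omega, rfl, rfl⟩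
    · rintro ⟨u, hu, v, hv, rfl, rfl⟩
      omega
  rw [hrw, Finset.card_biUnion]
  · have : ∀ i ∈ Finset.range (a + 1),
        ((Finset.Icc i (2 * a - i)).image (Prod.mk i)).card = 2 * (a - i) + 1 := by
      intro i hi
      rw [Finset.card_image_of_injective _ (fun x y h => by simpa using congrArg Prod.snd h),
        Nat.card_Icc]
      rw [Finset.mem_range] at hi
      omega
    rw [Finset.sum_congr rfl this]
    have := Finset.sum_range_reflect (fun i => 2 * i + 1) (a + 1)
    simp only [Nat.add_sub_cancel] at this
    calc ∑ i ∈ Finset.range (a + 1), (2 * (a - i) + 1)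
        = ∑ j ∈ Finset.range (a + 1), (2 * j + 1) := by
          rw [← this]
      _ = (a + 1) ^ 2 := sum_odd_sq (a + 1)
  · intro y _ y' _ hyy
    simp only [Finset.disjoint_left, Finset.mem_image]
    rintro ⟨u, v⟩ ⟨s, hs, hsv⟩ ⟨t, ht, htv⟩
    exact hyy (by
      have h1 := congrArg Prod.fst hsv
      have h2 := congrArg Prod.fst htv
      simp only at h1 h2
      rw [h1, h2])

/-! ### The monomial spanning set -/

section Mono

variable {F : Type} [Field F]

noncomputable def expE (p : ℕ × ℕ) : Fin 2 →₀ ℕ :=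
  Finsupp.single 0 p.1 + Finsupp.single 1 p.2

lemma expE_apply (p : ℕ × ℕ) : expE p 0 = p.1 ∧ expE p 1 = p.2 :=
  (fin2_finsupp_eq (expE p) p.1 p.2).mp rfl

lemma expE_inj : Function.Injective expE := by
  intro p q h
  have h1 := (fin2_finsupp_eq (expE p) q.1 q.2).mp (h ▸ rfl)
  have h2 := expE_apply p
  exact Prod.ext (by omega) (by omega)

noncomputable def monoT (F : Type) [Field F] (p : ℕ × ℕ) : MvPolynomial (Fin 2) F :=
  X 0 ^ p.1 * X 1 ^ p.2

lemma monoT_eq_monomial (p : ℕ × ℕ) : monoT F p = monomial (expE p) 1 := by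
  rw [monoT, MvPolynomial.X_pow_eq_monomial, MvPolynomial.X_pow_eq_monomial, monomial_mul,
    one_mul, expE]

lemma monoT_inj : Function.Injective (monoT F) := by
  intro p q h
  simp only [monoT_eq_monomial] at h
  have := (MvPolynomial.monomial_eq_monomial_iff _ _ _ _).mp h
  rcases this with ⟨hd, _⟩ | ⟨h1, _⟩
  · exact expE_inj hd
  · exact absurd h1 one_ne_zero

lemma span_set_eq (a : ℕ) :
    {m : MvPolynomial (Fin 2) F | ∃ i j : ℕ, i ≤ j ∧ i + j ≤ 2 * a ∧ m = X 0 ^ i * X 1 ^ j} =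
      monoT F '' ↑(DD a) := by
  ext m
  simp only [Set.mem_setOf_eq, Set.mem_image, Finset.mem_coe, DD,
    Finset.mem_filter, Finset.mem_product, Finset.mem_range, monoT]
  constructor
  · rintro ⟨i, j, h1, h2, rfl⟩
    exact ⟨(i, j), ⟨⟨by omega, by omega⟩, h1, h2⟩, rfl⟩
  · rintro ⟨⟨i, j⟩, ⟨_, h1, h2⟩, rfl⟩
    exact ⟨i, j, h1, h2, rfl⟩

lemma monoT_linearIndependent (a : ℕ) :
    LinearIndependent F ((↑) : ↑(monoT F '' ↑(DD a)) → MvPolynomial (Fin 2) F) := by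
  have hbasis := (MvPolynomial.basisMonomials (Fin 2) F).linearIndependent
  have hinj : Function.Injective (fun x : ↑(↑(DD a) : Set (ℕ × ℕ)) => expE ↑x) :=
    expE_inj.comp Subtype.val_injective
  have hli : LinearIndependent F
      (fun x : ↑(↑(DD a) : Set (ℕ × ℕ)) => monoT F ↑x) := by
    have h2 := hbasis.comp _ hinj
    convert h2 using 1
    funext x
    rw [monoT_eq_monomial]
    simp [MvPolynomial.coe_basisMonomials, Function.comp]
    all_goals rfl
  exact (linearIndepOn_iff_image (monoT_inj.injOn)).mp hli

lemma finrank_span_monoT (a : ℕ) :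
    Module.finrank F (Submodule.span F
      {m : MvPolynomial (Fin 2) F | ∃ i j : ℕ, i ≤ j ∧ i + j ≤ 2 * a ∧ m = X 0 ^ i * X 1 ^ j}) =
      (a + 1) ^ 2 := by
  classical
  rw [span_set_eq]
  haveI : Fintype ↑(monoT F '' ↑(DD a)) := ((DD a).finite_toSet.image _).fintype
  rw [finrank_span_set_eq_card (monoT_linearIndependent a)]
  rw [Set.toFinset_image]
  rw [Finset.card_image_of_injective _ monoT_inj]
  rw [Finset.toFinset_coe]
  exact DD_card a

lemma mem_span_support {a : ℕ} {f : MvPolynomial (Fin 2) F}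
    (hf : f ∈ Submodule.span F
      {m : MvPolynomial (Fin 2) F | ∃ i j : ℕ, i ≤ j ∧ i + j ≤ 2 * a ∧ m = X 0 ^ i * X 1 ^ j}) :
    ∀ d ∈ f.support, d 0 ≤ d 1 ∧ d 0 + d 1 ≤ 2 * a := by
  classical
  induction hf using Submodule.span_induction with
  | mem x hx =>
    obtain ⟨i, j, h1, h2, rfl⟩ := hx
    intro d hd
    rw [show (X 0 ^ i * X 1 ^ j : MvPolynomial (Fin 2) F) = monoT F (i, j) from rfl,
      monoT_eq_monomial, MvPolynomial.support_monomial] at hd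
    rw [if_neg (one_ne_zero : (1 : F) ≠ 0)] at hd
    rw [Finset.mem_singleton] at hd
    subst hd
    obtain ⟨e0, e1⟩ := expE_apply (i, j)
    rw [e0, e1]
    exact ⟨h1, h2⟩
  | zero => simp
  | add x y hx hy ihx ihy =>
    intro d hd
    rcases Finset.mem_union.mp (MvPolynomial.support_add hd) with h | h
    · exact ihx d h
    · exact ihy d h
  | smul c x hx ihx =>
    intro d hd
    exact ihx d (MvPolynomial.support_smul hd)

lemma finrank_map_of_injOn {M N : Type} [AddCommGroup M] [Module F M] [AddCommGroup N]
    [Module F N] (φ : M →ₗ[F] N) (p : Submodule F M) [FiniteDimensional F p]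
    (h : ∀ x ∈ p, φ x = 0 → x = 0) :
    Module.finrank F (p.map φ) = Module.finrank F p := by
  have hker : LinearMap.ker (φ.domRestrict p) = ⊥ := by
    rw [LinearMap.ker_eq_bot']
    rintro ⟨x, hx⟩ hphix
    have : φ x = 0 := hphix
    exact Subtype.ext (h x hx this)
  have h2 := LinearMap.finrank_range_add_finrank_ker (φ.domRestrict p)
  rw [LinearMap.range_domRestrict, hker, finrank_bot, add_zero] at h2
  exact h2

end Mono

/-! ### The weight facts -/

section Weight

variable {F : Type} [Field F]

lemma hammingNorm_card [Fintype F] [DecidableEq F] (c : (Fˣ × Fˣ) → F) :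
    hammingNorm c + (Finset.univ.filter fun t : Fˣ × Fˣ => c t = 0).card =
      Fintype.card (Fˣ × Fˣ) := by
  simp only [hammingNorm, ne_eq]
  rw [add_comm, ← Finset.card_univ]
  exact Finset.card_filter_add_card_filter_not _

lemma exists_good_word [Fintype F] [DecidableEq F] {a : ℕ} (hq : 2 * a + 1 < Fintype.card F) :
    ∃ f ∈ Submodule.span F
      {m : MvPolynomial (Fin 2) F | ∃ i j : ℕ, i ≤ j ∧ i + j ≤ 2 * a ∧ m = X 0 ^ i * X 1 ^ j},
      evalTorus F f ≠ 0 ∧ hammingNorm (evalTorus F f) =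
        (Fintype.card F - 1) ^ 2 - 2 * a * (Fintype.card F - 1) := by
  classical
  set Q := Fintype.card F - 1 with hQ
  have hcardU : Fintype.card Fˣ = Q := Fintype.card_units F
  have hQa : 2 * a < Q := by omega
  obtain ⟨t, -, htcard⟩ := Finset.exists_subset_card_eq
    (s := (Finset.univ : Finset Fˣ)) (n := 2 * a) (by rw [Finset.card_univ, hcardU]; omega)
  set p : Polynomial F := ∏ u ∈ t, (Polynomial.X - Polynomial.C (u : F)) with hp
  have hdeg : p.natDegree = 2 * a := by
    rw [hp, Polynomial.natDegree_prod _ _ (fun u _ => Polynomial.X_sub_C_ne_zero _)]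
    simp [Polynomial.natDegree_X_sub_C, htcard]
  set f : MvPolynomial (Fin 2) F := Polynomial.aeval (X 1 : MvPolynomial (Fin 2) F) p with hf
  refine ⟨f, ?_, ?_⟩
  · rw [hf, Polynomial.aeval_eq_sum_range]
    apply Submodule.sum_mem
    intro k hk
    apply Submodule.smul_mem
    apply Submodule.subset_span
    exact ⟨0, k, Nat.zero_le k, by rw [Finset.mem_range, hdeg] at hk; omega,
      by rw [pow_zero, one_mul]⟩
  · have heval : ∀ s : Fˣ × Fˣ, evalTorus F f s = Polynomial.eval ((s.2 : F)) p := by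
      intro s
      rw [evalTorus_apply, hf]
      rw [← Polynomial.aeval_algHom_apply]
      have hX : (aeval ![((s.1 : F)), ((s.2 : F))]) (X 1 : MvPolynomial (Fin 2) F)
          = (s.2 : F) := by simp
      rw [hX]
      exact congrFun (Polynomial.coe_aeval_eq_eval _) p
    have hzeroset : (Finset.univ.filter fun y : Fˣ => Polynomial.eval ((y : F)) p = 0) = t := by
      ext y
      simp only [Finset.mem_filter, Finset.mem_univ, true_and, hp, Polynomial.eval_prod,
        Finset.prod_eq_zero_iff, Polynomial.eval_sub, Polynomial.eval_X, Polynomial.eval_C,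
        sub_eq_zero]
      constructor
      · rintro ⟨u, hu, h⟩
        rwa [show y = u from Units.ext h]
      · intro hy
        exact ⟨y, hy, rfl⟩
    have hnorm : hammingNorm (evalTorus F f) = (Q - 2 * a) * Q := by
      have hsplit : (Finset.univ.filter fun s : Fˣ × Fˣ => evalTorus F f s = 0).card =
          2 * a * Q := by
        have heq : (Finset.univ.filter fun s : Fˣ × Fˣ => evalTorus F f s = 0) =
            Finset.univ ×ˢ t := by
          ext ⟨x, y⟩
          simp only [Finset.mem_filter, Finset.mem_univ, true_and, Finset.mem_product, heval]
          rw [← hzeroset]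
          simp
        rw [heq, Finset.card_product, Finset.card_univ, hcardU, htcard, mul_comm]
      have h2 := hammingNorm_card (evalTorus F f)
      rw [hsplit] at h2
      have hcardT : Fintype.card (Fˣ × Fˣ) = Q * Q := by
        rw [Fintype.card_prod, hcardU]
      rw [hcardT] at h2
      have : (Q - 2 * a) * Q = Q * Q - 2 * a * Q := by
        rw [Nat.sub_mul]
      omega
    have hpos : 0 < (Q - 2 * a) * Q := Nat.mul_pos (by omega) (by omega)
    constructor
    · intro hc0
      rw [hc0, hammingNorm_zero] at hnorm
      omega
    · rw [hnorm, Nat.sub_mul, pow_two]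

end Weight

/-- Hansen's toric code for the triangle with vertices (0,0), (a,a), (0,2a):
length (q-1)², dimension (a+1)², minimum distance n - 2a(q-1). -/
theorem hansen_code_isoceles (F : Type) [Field F] [Fintype F] [DecidableEq F]
    (a : ℕ) (ha : 0 < a) (hq : 2 * a + 1 < Fintype.card F) :
    Fintype.card (Fˣ × Fˣ) = (Fintype.card F - 1) ^ 2 ∧
    Module.finrank F ((Submodule.span F
        {m : MvPolynomial (Fin 2) F |
          ∃ i j : ℕ, i ≤ j ∧ i + j ≤ 2 * a ∧ m = X 0 ^ i * X 1 ^ j}).map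
        (evalTorus F)) = (a + 1) ^ 2 ∧
    (∃ c ∈ (Submodule.span F
        {m : MvPolynomial (Fin 2) F |
          ∃ i j : ℕ, i ≤ j ∧ i + j ≤ 2 * a ∧ m = X 0 ^ i * X 1 ^ j}).map
        (evalTorus F), c ≠ 0 ∧
        hammingNorm c = (Fintype.card F - 1) ^ 2 - 2 * a * (Fintype.card F - 1)) ∧
    (∀ c ∈ (Submodule.span F
        {m : MvPolynomial (Fin 2) F |
          ∃ i j : ℕ, i ≤ j ∧ i + j ≤ 2 * a ∧ m = X 0 ^ i * X 1 ^ j}).map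
        (evalTorus F), c ≠ 0 →
        (Fintype.card F - 1) ^ 2 - 2 * a * (Fintype.card F - 1) ≤ hammingNorm c) := by
  classical
  set Q := Fintype.card F - 1 with hQ
  have hcardU : Fintype.card Fˣ = Q := Fintype.card_units F
  have hcardT : Fintype.card (Fˣ × Fˣ) = Q ^ 2 := by
    rw [Fintype.card_prod, hcardU, pow_two]
  have hQa : 2 * a < Q := by omega
  -- the key injectivity fact
  have hinj : ∀ f ∈ Submodule.span F
      {m : MvPolynomial (Fin 2) F | ∃ i j : ℕ, i ≤ j ∧ i + j ≤ 2 * a ∧ m = X 0 ^ i * X 1 ^ j},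
      evalTorus F f = 0 → f = 0 := by
    intro f hf h0
    by_contra hf0
    have hz := zeros_card_le hf0 (mem_span_support hf)
    have hall : (Finset.univ.filter
        (fun t : Fˣ × Fˣ => aeval ![(t.1 : F), (t.2 : F)] f = 0)) = Finset.univ := by
      rw [Finset.filter_eq_self]
      intro t _
      rw [← evalTorus_apply, h0]
      rfl
    rw [hall, Finset.card_univ, hcardT] at hz
    have : Q ^ 2 ≤ 2 * a * Q := hz
    rw [pow_two] at this
    have h3 : 2 * a * Q < Q * Q := by
      apply Nat.mul_lt_mul_of_lt_of_le hQa le_rfl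
      omega
    omega
  refine ⟨hcardT, ?_, ?_, ?_⟩
  · haveI : FiniteDimensional F (Submodule.span F
        {m : MvPolynomial (Fin 2) F |
          ∃ i j : ℕ, i ≤ j ∧ i + j ≤ 2 * a ∧ m = X 0 ^ i * X 1 ^ j}) := by
      rw [span_set_eq]
      exact FiniteDimensional.span_of_finite F ((DD a).finite_toSet.image _)
    rw [finrank_map_of_injOn _ _ hinj, finrank_span_monoT]
  · obtain ⟨f, hfmem, hc0, hnorm⟩ := exists_good_word hq
    exact ⟨evalTorus F f, ⟨f, hfmem, rfl⟩, hc0, hnorm⟩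
  · rintro c ⟨f, hf, rfl⟩ hc0
    have hf0 : f ≠ 0 := by
      rintro rfl
      exact hc0 (map_zero _)
    have hz := zeros_card_le hf0 (mem_span_support hf)
    have hhn := hammingNorm_card (evalTorus F f)
    have hfilter : (Finset.univ.filter fun t : Fˣ × Fˣ => evalTorus F f t = 0) =
        (Finset.univ.filter fun t : Fˣ × Fˣ => aeval ![(t.1 : F), (t.2 : F)] f = 0) := by
      apply Finset.filter_congr
      intro t _
      rw [evalTorus_apply]
    rw [hfilter, hcardT] at hhn
    have hz' : (Finset.univ.filter
        (fun t : Fˣ × Fˣ => aeval ![(t.1 : F), (t.2 : F)] f = 0)).card ≤ 2 * a * Q := hQ ▸ hz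
    have key : ∀ A B z n : ℕ, n + z = A → z ≤ B → A - B ≤ n := by omega
    exact key (Q ^ 2) (2 * a * Q) _ _ hhn hz'
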